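/- arXiv:2010.04352 — 2 statements merged into one kernel-verified Lean document; each statement's English description precedes it below -/
import Mathlib

section
/- Let φ : ℝ^d → ℝ be differentiable and satisfy, for constants 0 < m ≤ M and all u, v ∈ ℝ^d: ⟨∇φ(u) − ∇φ(v), u − v⟩ ≥ m ‖u − v‖² and ‖∇φ(u) − ∇φ(v)‖ ≤ M ‖u − v‖. Let g : ℝ^d → ℝ^d satisfy ‖g(x) − ∇φ(x)‖ ≤ ε_g for all x, with ε_g > 0. Fix c₃ > 0, x ∈ ℝ^d and s ∈ ℝ^d with s ≠ 0, let y = g(x + s) − g(x), and suppose ⟨s, y⟩ ≥ 2(1 + c₃) ε_g ‖s‖. Then ⟨s, y⟩ / ⟨s, s⟩ ≥ ((1 + c₃)/(2 + c₃)) m and ⟨y, y⟩ / ⟨s, y⟩ ≤ (1 + 1/c₃) M. -/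
/-!
Let `ȳ = ∇φ (x + s) - ∇φ x`, so that `‖y - ȳ‖ ≤ 2εg`. Strong convexity gives `m‖s‖² ≤ ⟪ȳ, s⟫`,
and cocoercivity of the gradient (Baillon–Haddad), `‖ȳ‖² ≤ M⟪ȳ, s⟫`, says that `ȳ` lies in the
ball of radius `M‖s‖/2` about `(M/2) s`; hence `y` lies in that ball enlarged by `2εg`. The noise
condition `(1 + c₃)·2εg‖s‖ ≤ ⟪s, y⟫` makes every noise term a fraction `1/(1 + c₃)`, resp. `1/c₃`,
of `⟪s, y⟫`, which turns these estimates into the two bounds.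
-/

open Set
open scoped RealInnerProductSpace Gradient

lemma image_one_le_of_hasDerivAt_le {f g f' g' : ℝ → ℝ}
    (hf : ∀ t, HasDerivAt f (f' t) t) (hg : ∀ t, HasDerivAt g (g' t) t)
    (h₀ : f 0 ≤ g 0) (hle : ∀ t ∈ Ioo (0 : ℝ) 1, f' t ≤ g' t) : f 1 ≤ g 1 := by
  have hmono : MonotoneOn (fun t ↦ g t - f t) (Icc 0 1) := by
    refine monotoneOn_of_hasDerivWithinAt_nonneg (f' := fun t ↦ g' t - f' t) (convex_Icc 0 1)
      (fun t _ ↦ ((hg t).sub (hf t)).continuousAt.continuousWithinAt)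
      (fun t _ ↦ ((hg t).sub (hf t)).hasDerivWithinAt) fun t ht ↦ ?_
    rw [interior_Icc] at ht
    exact sub_nonneg.2 (hle t ht)
  have := hmono (left_mem_Icc.2 zero_le_one) (right_mem_Icc.2 zero_le_one) zero_le_one
  linarith

section Gradient

variable {E : Type*} [NormedAddCommGroup E] [InnerProductSpace ℝ E] [CompleteSpace E]
  {φ : E → ℝ}

lemma hasDerivAt_sub_inner_gradient_line (hφ : Differentiable ℝ φ) (a w : E) (t : ℝ) :
    HasDerivAt (fun t : ℝ ↦ φ (a + t • w) - t * ⟪∇ φ a, w⟫)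
      ⟪∇ φ (a + t • w) - ∇ φ a, w⟫ t := by
  have hline : HasDerivAt (fun t : ℝ ↦ a + t • w) w t := by
    simpa using ((hasDerivAt_id t).smul_const w).const_add a
  have hcomp := (hφ (a + t • w)).hasGradientAt.hasFDerivAt.comp_hasDerivAt t hline
  simp only [Function.comp_def, InnerProductSpace.toDual_apply_apply] at hcomp
  rw [inner_sub_left]
  exact hcomp.sub (by simpa using (hasDerivAt_id t).mul_const ⟪∇ φ a, w⟫)

lemma add_inner_gradient_le_of_monotone (hφ : Differentiable ℝ φ)
    (hmono : ∀ u v, 0 ≤ ⟪∇ φ u - ∇ φ v, u - v⟫) (a b : E) :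
    φ a + ⟪∇ φ a, b - a⟫ ≤ φ b := by
  obtain ⟨w, rfl⟩ : ∃ w, b = a + w := ⟨b - a, by abel⟩
  have key := image_one_le_of_hasDerivAt_le (fun t ↦ hasDerivAt_const t (φ a))
    (hasDerivAt_sub_inner_gradient_line hφ a w) (by simp) fun t ht ↦ by
      have h := hmono (a + t • w) a
      rw [add_sub_cancel_left, inner_smul_right] at h
      exact nonneg_of_mul_nonneg_right h ht.1
  simp only [one_smul, one_mul] at key
  rw [add_sub_cancel_left]
  linarith

lemma le_add_inner_gradient_add_sq_of_lipschitz (hφ : Differentiable ℝ φ) {M : ℝ}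
    (hlip : ∀ u v, ‖∇ φ u - ∇ φ v‖ ≤ M * ‖u - v‖) (a b : E) :
    φ b ≤ φ a + ⟪∇ φ a, b - a⟫ + M / 2 * ‖b - a‖ ^ 2 := by
  obtain ⟨w, rfl⟩ : ∃ w, b = a + w := ⟨b - a, by abel⟩
  have hquad (t : ℝ) : HasDerivAt (fun t : ℝ ↦ φ a + M / 2 * ‖w‖ ^ 2 * t ^ 2)
      (M * ‖w‖ ^ 2 * t) t := by
    refine (((hasDerivAt_pow 2 t).const_mul (M / 2 * ‖w‖ ^ 2)).const_add (φ a)).congr_deriv ?_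
    ring
  have key := image_one_le_of_hasDerivAt_le (hasDerivAt_sub_inner_gradient_line hφ a w)
    hquad (by simp) fun t ht ↦ calc
      ⟪∇ φ (a + t • w) - ∇ φ a, w⟫ ≤ ‖∇ φ (a + t • w) - ∇ φ a‖ * ‖w‖ := real_inner_le_norm _ _
      _ ≤ M * ‖t • w‖ * ‖w‖ := by
        gcongr
        simpa using hlip (a + t • w) a
      _ = M * ‖w‖ ^ 2 * t := by
        rw [norm_smul, Real.norm_of_nonneg ht.1.le]
        ring
  simp only [one_smul, one_mul, one_pow, mul_one] at key
  rw [add_sub_cancel_left]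
  linarith

variable (φ) in
noncomputable def bregmanDiv (a b : E) : ℝ := φ b - φ a - ⟪∇ φ a, b - a⟫

lemma bregmanDiv_add_bregmanDiv (a b : E) :
    bregmanDiv φ a b + bregmanDiv φ b a = ⟪∇ φ b - ∇ φ a, b - a⟫ := by
  rw [bregmanDiv, bregmanDiv, ← neg_sub b a, inner_neg_right, inner_sub_left]
  ring

lemma sq_norm_gradient_sub_le_bregmanDiv (hφ : Differentiable ℝ φ)
    (hmono : ∀ u v, 0 ≤ ⟪∇ φ u - ∇ φ v, u - v⟫) {M : ℝ} (hM : 0 < M)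
    (hlip : ∀ u v, ‖∇ φ u - ∇ φ v‖ ≤ M * ‖u - v‖) (a b : E) :
    ‖∇ φ b - ∇ φ a‖ ^ 2 ≤ 2 * M * bregmanDiv φ a b := by
  set D := ∇ φ b - ∇ φ a
  -- `z` is the gradient step from `b` for `φ - ⟪∇ φ a, ·⟫`, whose minimum is at `a`
  set z := b - M⁻¹ • D with hz
  have h₁ := add_inner_gradient_le_of_monotone hφ hmono a z
  have h₂ := le_add_inner_gradient_add_sq_of_lipschitz hφ hlip b z
  have hza : z - a = (b - a) - M⁻¹ • D := by rw [hz]; abel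
  have hzb : z - b = -(M⁻¹ • D) := by rw [hz]; abel
  rw [hza, inner_sub_right, inner_smul_right] at h₁
  rw [hzb, inner_neg_right, inner_smul_right, norm_neg, norm_smul,
    Real.norm_of_nonneg (inv_nonneg.2 hM.le)] at h₂
  have hD : ⟪∇ φ b, D⟫ - ⟪∇ φ a, D⟫ = ‖D‖ ^ 2 := by
    rw [← inner_sub_left, real_inner_self_eq_norm_sq]
  have hquad : M / 2 * (M⁻¹ * ‖D‖) ^ 2 = ‖D‖ ^ 2 / (2 * M) := by
    field_simp
  have key : ‖D‖ ^ 2 / (2 * M) ≤ bregmanDiv φ a b := by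
    rw [bregmanDiv]
    linear_combination h₁ + h₂ - M⁻¹ * hD + hquad
  rwa [div_le_iff₀ (by positivity), mul_comm] at key

lemma sq_norm_gradient_sub_le_mul_inner (hφ : Differentiable ℝ φ)
    (hmono : ∀ u v, 0 ≤ ⟪∇ φ u - ∇ φ v, u - v⟫) {M : ℝ} (hM : 0 < M)
    (hlip : ∀ u v, ‖∇ φ u - ∇ φ v‖ ≤ M * ‖u - v‖) (u v : E) :
    ‖∇ φ u - ∇ φ v‖ ^ 2 ≤ M * ⟪∇ φ u - ∇ φ v, u - v⟫ := by
  have h₁ := sq_norm_gradient_sub_le_bregmanDiv hφ hmono hM hlip v u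
  have h₂ := sq_norm_gradient_sub_le_bregmanDiv hφ hmono hM hlip u v
  rw [norm_sub_rev] at h₂
  rw [← bregmanDiv_add_bregmanDiv]
  linarith

end Gradient

lemma mul_le_div_sq_of_le_add {m δ c N A : ℝ} (hc : 0 < c) (hN : 0 < N)
    (hconv : m * N ^ 2 ≤ A + δ * N) (hnc : (1 + c) * δ * N ≤ A) :
    (1 + c) / (2 + c) * m ≤ A / N ^ 2 := by
  rw [div_mul_eq_mul_div, div_le_div_iff₀ (by positivity) (by positivity)]
  linear_combination (1 + c) * hconv + hnc

lemma div_le_mul_of_le_add {M δ c N A Y : ℝ} (hM : 0 ≤ M) (hδ : 0 ≤ δ) (hc : 0 < c)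
    (hN : 0 < N) (hY : Y ≤ M * A + δ * (M * N + δ)) (hA : A ≤ M * N ^ 2 + δ * N)
    (hnc : (1 + c) * δ * N ≤ A) : Y / A ≤ (1 + 1 / c) * M := by
  have hδN : c * δ ≤ M * N := le_of_mul_le_mul_right (by linear_combination hnc + hA) hN
  have hnoise : δ * (M * N + δ) ≤ M * A / c := by
    rw [le_div_iff₀ hc]
    nlinarith [mul_le_mul_of_nonneg_left hδN hδ, mul_le_mul_of_nonneg_left hnc hM]
  refine div_le_of_le_mul₀ ((by positivity : 0 ≤ (1 + c) * δ * N).trans hnc) (by positivity) ?_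
  calc Y ≤ M * A + M * A / c := by linarith
    _ = (1 + 1 / c) * M * A := by ring

section Perturbation

variable {E : Type*} [NormedAddCommGroup E] [InnerProductSpace ℝ E]

lemma norm_sub_half_smul_sq (v s : E) (M : ℝ) :
    ‖v - (M / 2) • s‖ ^ 2 = ‖v‖ ^ 2 - M * ⟪v, s⟫ + (M / 2 * ‖s‖) ^ 2 := by
  rw [norm_sub_sq_real, inner_smul_right, norm_smul, Real.norm_eq_abs, mul_pow, mul_pow, sq_abs]
  ring

lemma norm_sub_half_smul_le_of_sq_norm_le {v s : E} {M : ℝ} (hM : 0 ≤ M)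
    (h : ‖v‖ ^ 2 ≤ M * ⟪v, s⟫) : ‖v - (M / 2) • s‖ ≤ M / 2 * ‖s‖ := by
  refine (pow_le_pow_iff_left₀ (norm_nonneg _) (by positivity) two_ne_zero).1 ?_
  rw [norm_sub_half_smul_sq]
  linarith

variable {s y y₀ : E} {δ : ℝ}

lemma mul_sq_norm_le_inner_add_of_norm_sub_le {m : ℝ} (hconv : m * ‖s‖ ^ 2 ≤ ⟪y₀, s⟫)
    (herr : ‖y - y₀‖ ≤ δ) : m * ‖s‖ ^ 2 ≤ ⟪s, y⟫ + δ * ‖s‖ := by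
  have hpert : -(δ * ‖s‖) ≤ ⟪s, y - y₀⟫ := calc
    -(δ * ‖s‖) ≤ -(‖s‖ * ‖y - y₀‖) := by
      rw [mul_comm δ]
      gcongr
    _ ≤ ⟪s, y - y₀⟫ := neg_le_of_abs_le (abs_real_inner_le_norm s (y - y₀))
  rw [inner_sub_right, real_inner_comm y₀ s] at hpert
  linarith

lemma sq_norm_le_and_inner_le_of_norm_sub_le {M : ℝ} (hM : 0 ≤ M)
    (hcoco : ‖y₀‖ ^ 2 ≤ M * ⟪y₀, s⟫) (herr : ‖y - y₀‖ ≤ δ) :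
    ‖y‖ ^ 2 ≤ M * ⟪s, y⟫ + δ * (M * ‖s‖ + δ) ∧ ⟪s, y⟫ ≤ M * ‖s‖ ^ 2 + δ * ‖s‖ := by
  have hball : ‖y - (M / 2) • s‖ ≤ M / 2 * ‖s‖ + δ := calc
    ‖y - (M / 2) • s‖ = ‖(y₀ - (M / 2) • s) + (y - y₀)‖ := by congr 1; abel
    _ ≤ ‖y₀ - (M / 2) • s‖ + ‖y - y₀‖ := norm_add_le _ _
    _ ≤ M / 2 * ‖s‖ + δ := add_le_add (norm_sub_half_smul_le_of_sq_norm_le hM hcoco) herr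
  constructor
  · have hsq := pow_le_pow_left₀ (norm_nonneg _) hball 2
    rw [norm_sub_half_smul_sq, real_inner_comm] at hsq
    linear_combination hsq
  · have hproj : ⟪s, y - (M / 2) • s⟫ ≤ ‖s‖ * (M / 2 * ‖s‖ + δ) :=
      (real_inner_le_norm _ _).trans (mul_le_mul_of_nonneg_left hball (norm_nonneg s))
    rw [inner_sub_right, inner_smul_right, real_inner_self_eq_norm_sq] at hproj
    linear_combination hproj

theorem curvature_pair_bounds_of_norm_sub_le {m M c : ℝ} (hM : 0 ≤ M) (hδ : 0 ≤ δ) (hc : 0 < c)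
    (hs : s ≠ 0) (hconv : m * ‖s‖ ^ 2 ≤ ⟪y₀, s⟫) (hcoco : ‖y₀‖ ^ 2 ≤ M * ⟪y₀, s⟫)
    (herr : ‖y - y₀‖ ≤ δ) (hnc : (1 + c) * δ * ‖s‖ ≤ ⟪s, y⟫) :
    (1 + c) / (2 + c) * m ≤ ⟪s, y⟫ / ⟪s, s⟫ ∧ ⟪y, y⟫ / ⟪s, y⟫ ≤ (1 + 1 / c) * M := by
  have hs' : 0 < ‖s‖ := norm_pos_iff.2 hs
  obtain ⟨hY, hA⟩ := sq_norm_le_and_inner_le_of_norm_sub_le hM hcoco herr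
  rw [real_inner_self_eq_norm_sq, real_inner_self_eq_norm_sq]
  exact ⟨mul_le_div_sq_of_le_add hc hs' (mul_sq_norm_le_inner_add_of_norm_sub_le hconv herr) hnc,
    div_le_mul_of_le_add hM hδ hc hs' hY hA hnc⟩

end Perturbation

/-- Corollary of Lemma 3.1 with `c = 2(1 + c₃)`, giving the guarantee (3.12) on all
curvature pairs produced by the algorithm. -/
theorem curvature_pair_bounds_for_algorithm
    {d : ℕ} (φ : EuclideanSpace ℝ (Fin d) → ℝ) (hφ : Differentiable ℝ φ)
    (m M : ℝ) (hm : 0 < m) (hmM : m ≤ M)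
    (hconv : ∀ u v : EuclideanSpace ℝ (Fin d),
      (inner ℝ (gradient φ u - gradient φ v) (u - v) : ℝ) ≥ m * ‖u - v‖ ^ 2)
    (hlip : ∀ u v : EuclideanSpace ℝ (Fin d),
      ‖gradient φ u - gradient φ v‖ ≤ M * ‖u - v‖)
    (g : EuclideanSpace ℝ (Fin d) → EuclideanSpace ℝ (Fin d))
    (εg : ℝ) (hεg : 0 < εg)
    (hg : ∀ x, ‖g x - gradient φ x‖ ≤ εg)
    (c₃ : ℝ) (hc₃ : 0 < c₃)
    (x s : EuclideanSpace ℝ (Fin d)) (hs : s ≠ 0)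
    (y : EuclideanSpace ℝ (Fin d)) (hy : y = g (x + s) - g x)
    (hnc : (inner ℝ s y : ℝ) ≥ 2 * (1 + c₃) * εg * ‖s‖) :
    (inner ℝ s y : ℝ) / (inner ℝ s s : ℝ) ≥ ((1 + c₃) / (2 + c₃)) * m ∧
      (inner ℝ y y : ℝ) / (inner ℝ s y : ℝ) ≤ (1 + 1 / c₃) * M := by
  have hM : 0 < M := hm.trans_le hmM
  have hmono : ∀ u v, 0 ≤ ⟪∇ φ u - ∇ φ v, u - v⟫ := fun u v ↦
    (by positivity : 0 ≤ m * ‖u - v‖ ^ 2).trans (hconv u v)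
  have hstrong := hconv (x + s) x
  have hcoco := sq_norm_gradient_sub_le_mul_inner hφ hmono hM hlip (x + s) x
  rw [add_sub_cancel_left] at hstrong hcoco
  have herr : ‖y - (∇ φ (x + s) - ∇ φ x)‖ ≤ 2 * εg := calc
    _ = ‖(g (x + s) - ∇ φ (x + s)) - (g x - ∇ φ x)‖ := by rw [hy, sub_sub_sub_comm]
    _ ≤ εg + εg := (norm_sub_le _ _).trans (add_le_add (hg _) (hg x))
    _ = 2 * εg := (two_mul εg).symm
  exact curvature_pair_bounds_of_norm_sub_le hM.le (by positivity) hc₃ hs hstrong hcoco herr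
    (by linarith)
end

section
/- Let 0 < m̂ ≤ M̂, let δ ∈ [m̂, M̂], and let B₀ = δ I (d × d identity scaled by δ). Suppose that for i = 0, …, t−1 we are given pairs (sᵢ, yᵢ) ∈ ℝ^d × ℝ^d with sᵢ ≠ 0, ⟨sᵢ, yᵢ⟩ > 0, ⟨sᵢ, yᵢ⟩/⟨sᵢ, sᵢ⟩ ≥ m̂ and ⟨yᵢ, yᵢ⟩/⟨sᵢ, yᵢ⟩ ≤ M̂, and define B_{i+1} = Bᵢ − (Bᵢ sᵢ)(Bᵢ sᵢ)ᵀ/⟨sᵢ, Bᵢ sᵢ⟩ + yᵢ yᵢᵀ/⟨sᵢ, yᵢ⟩. Then every Bᵢ is symmetric positive definite and the condition number of the final matrix satisfies κ(B_t) ≤ exp[(d + t)(M̂ − log m̂)]. -/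
/-!
Track the Byrd–Nocedal potential `ψ(B) = tr B - log det B`. For a positive definite `B` it equals
`∑ (λ - log λ)` over the eigenvalues, and since every term is positive and `2 log λ ≤ λ`, it
dominates `log (λ_max / λ_min)`. The scaled identity has `ψ(δ I) = d (δ - log δ) ≤ d (M̂ - log m̂)`.
A BFGS update changes the trace by `‖y‖²/⟪s,y⟫ - ‖Bs‖²/⟪s,Bs⟫` and multiplies the determinant by
`⟪s,y⟫/⟪s,Bs⟫` (matrix determinant lemma); with Cauchy–Schwarz `⟪s,Bs⟫² ≤ ‖s‖²‖Bs‖²` and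
`log x ≤ x - 1` this makes `ψ` grow by at most `M̂ - log m̂` per update.
-/

theorem Real.two_mul_log_le_self {x : ℝ} (hx : 0 < x) : 2 * Real.log x ≤ x := by
  have hlog_sqrt := Real.log_le_sub_one_of_pos (Real.sqrt_pos.mpr hx)
  rw [Real.log_sqrt hx.le] at hlog_sqrt
  nlinarith [Real.sq_sqrt hx.le, sq_nonneg (Real.sqrt x - 2)]

/-- Every term `f k - log (f k)` is positive, and the two at `i` and `j` already dominate the
left side because `2 log (f i) ≤ f i`. -/
theorem Real.log_sub_log_le_sum_sub_log {ι : Type*} [Fintype ι] {f : ι → ℝ}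
    (hf : ∀ k, 0 < f k) (i j : ι) :
    Real.log (f i) - Real.log (f j) ≤ ∑ k, (f k - Real.log (f k)) := by
  classical
  have hterm : ∀ k, 0 ≤ f k - Real.log (f k) := fun k => by
    linarith [Real.log_le_sub_one_of_pos (hf k)]
  rcases eq_or_ne i j with rfl | hij
  · simpa using Finset.sum_nonneg fun k _ => hterm k
  · have hpair :
        (f i - Real.log (f i)) + (f j - Real.log (f j)) ≤ ∑ k, (f k - Real.log (f k)) := by
      rw [← Finset.sum_pair (f := fun k => f k - Real.log (f k)) hij]
      exact Finset.sum_le_sum_of_subset_of_nonneg (Finset.subset_univ _) fun k _ _ => hterm k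
    linarith [Real.two_mul_log_le_self (hf i), hf j]

namespace Matrix

variable {n : Type*} [Fintype n]

theorem dotProduct_sq_le_dotProduct_self_mul (v w : n → ℝ) :
    (v ⬝ᵥ w) ^ 2 ≤ (v ⬝ᵥ v) * (w ⬝ᵥ w) := by
  simpa [dotProduct, sq] using Finset.sum_mul_sq_le_sq_mul_sq Finset.univ v w

noncomputable def bfgsUpdate (B : Matrix n n ℝ) (s y : n → ℝ) : Matrix n n ℝ :=
  B - (s ⬝ᵥ B *ᵥ s)⁻¹ • vecMulVec (B *ᵥ s) (B *ᵥ s) + (s ⬝ᵥ y)⁻¹ • vecMulVec y y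

theorem IsHermitian.bfgsUpdate {B : Matrix n n ℝ} (hB : B.IsHermitian) (s y : n → ℝ) :
    (B.bfgsUpdate s y).IsHermitian := by
  simp only [Matrix.bfgsUpdate, IsHermitian, conjTranspose_eq_transpose_of_trivial,
    transpose_add, transpose_sub, transpose_smul, transpose_vecMulVec]
  rw [← conjTranspose_eq_transpose_of_trivial, hB.eq]

theorem trace_bfgsUpdate (B : Matrix n n ℝ) (s y : n → ℝ) :
    (B.bfgsUpdate s y).trace =
      B.trace - (B *ᵥ s ⬝ᵥ B *ᵥ s) / (s ⬝ᵥ B *ᵥ s) + (y ⬝ᵥ y) / (s ⬝ᵥ y) := by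
  simp [Matrix.bfgsUpdate, trace_add, trace_sub, trace_smul, div_eq_inv_mul]

theorem dotProduct_bfgsUpdate_mulVec (B : Matrix n n ℝ) (s y x : n → ℝ) :
    x ⬝ᵥ B.bfgsUpdate s y *ᵥ x =
      x ⬝ᵥ B *ᵥ x - (B *ᵥ s ⬝ᵥ x) ^ 2 / (s ⬝ᵥ B *ᵥ s) + (y ⬝ᵥ x) ^ 2 / (s ⬝ᵥ y) := by
  simp only [Matrix.bfgsUpdate, add_mulVec, sub_mulVec, smul_mulVec, vecMulVec_mulVec,
    dotProduct_add, dotProduct_sub, dotProduct_smul, op_smul_eq_smul, smul_eq_mul]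
  rw [dotProduct_comm x (B *ᵥ s), dotProduct_comm x y]
  ring

theorem IsHermitian.dotProduct_mulVec_comm {B : Matrix n n ℝ} (hB : B.IsHermitian)
    (x z : n → ℝ) : x ⬝ᵥ B *ᵥ z = z ⬝ᵥ B *ᵥ x := by
  rw [dotProduct_mulVec, ← vecMul_transpose, ← conjTranspose_eq_transpose_of_trivial, hB.eq,
    dotProduct_comm]

/-- Completing the square in the quadratic form of `B` along `s`. -/
theorem IsHermitian.dotProduct_mulVec_sub_sq_div {B : Matrix n n ℝ} (hB : B.IsHermitian)
    {s : n → ℝ} (hs : s ⬝ᵥ B *ᵥ s ≠ 0) (x : n → ℝ) :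
    x ⬝ᵥ B *ᵥ x - (B *ᵥ s ⬝ᵥ x) ^ 2 / (s ⬝ᵥ B *ᵥ s) =
      (x - ((B *ᵥ s ⬝ᵥ x) / (s ⬝ᵥ B *ᵥ s)) • s) ⬝ᵥ
        B *ᵥ (x - ((B *ᵥ s ⬝ᵥ x) / (s ⬝ᵥ B *ᵥ s)) • s) := by
  have hsx : s ⬝ᵥ B *ᵥ x = B *ᵥ s ⬝ᵥ x := by rw [hB.dotProduct_mulVec_comm, dotProduct_comm]
  have hxs : x ⬝ᵥ B *ᵥ s = B *ᵥ s ⬝ᵥ x := dotProduct_comm _ _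
  simp only [mulVec_sub, mulVec_smul, dotProduct_sub, sub_dotProduct, dotProduct_smul,
    smul_dotProduct, smul_eq_mul, hsx, hxs]
  field_simp
  ring

theorem PosDef.bfgsUpdate {B : Matrix n n ℝ} (hB : B.PosDef) {s y : n → ℝ}
    (hsy : 0 < s ⬝ᵥ y) : (B.bfgsUpdate s y).PosDef := by
  have hs : s ≠ 0 := by rintro rfl; simp at hsy
  have hσ : 0 < s ⬝ᵥ B *ᵥ s := by simpa using hB.dotProduct_mulVec_pos hs
  refine .of_dotProduct_mulVec_pos (hB.isHermitian.bfgsUpdate s y) fun x hx => ?_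
  rw [star_trivial, dotProduct_bfgsUpdate_mulVec, hB.isHermitian.dotProduct_mulVec_sub_sq_div
    hσ.ne']
  set c := (B *ᵥ s ⬝ᵥ x) / (s ⬝ᵥ B *ᵥ s)
  rcases eq_or_ne (x - c • s) 0 with hw | hw
  · -- `x` is a nonzero multiple of `s`, which the `y`-term sees since `⟪s, y⟫ > 0`
    have hx_eq : x = c • s := sub_eq_zero.mp hw
    have hc : c ≠ 0 := by rintro hc; simp [hx_eq, hc] at hx
    have hyx : y ⬝ᵥ x ≠ 0 := by
      rw [hx_eq, dotProduct_smul, smul_eq_mul, dotProduct_comm]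
      exact mul_ne_zero hc hsy.ne'
    rw [hw, zero_dotProduct, zero_add]
    positivity
  · have := hB.dotProduct_mulVec_pos hw
    rw [star_trivial] at this
    have : 0 ≤ (y ⬝ᵥ x) ^ 2 / (s ⬝ᵥ y) := by positivity
    linarith

theorem PosDef.det_bfgsUpdate [DecidableEq n] {B : Matrix n n ℝ} (hB : B.PosDef) {s y : n → ℝ}
    (hsy : 0 < s ⬝ᵥ y) :
    (B.bfgsUpdate s y).det = B.det * ((s ⬝ᵥ y) / (s ⬝ᵥ B *ᵥ s)) := by
  have hs : s ≠ 0 := by rintro rfl; simp at hsy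
  have hσ : 0 < s ⬝ᵥ B *ᵥ s := by simpa using hB.dotProduct_mulVec_pos hs
  have hdet : IsUnit B.det := (isUnit_iff_isUnit_det B).mp hB.isUnit
  -- rank-two form `B⁺ = B + U * V`, for the matrix determinant lemma
  set U : Matrix n (Fin 2) ℝ := (of ![B *ᵥ s, y])ᵀ
  set V : Matrix (Fin 2) n ℝ := of ![-(s ⬝ᵥ B *ᵥ s)⁻¹ • B *ᵥ s, (s ⬝ᵥ y)⁻¹ • y]
  have hUV : B.bfgsUpdate s y = B + U * V := by
    ext i j
    simp [Matrix.bfgsUpdate, U, V, mul_apply, Fin.sum_univ_two, vecMulVec_apply]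
    ring
  have hBU : B⁻¹ * U = (of ![s, B⁻¹ *ᵥ y])ᵀ := by
    ext i k
    change (B⁻¹ *ᵥ ![B *ᵥ s, y] k) i = _
    fin_cases k
    · simp [mulVec_mulVec, nonsing_inv_mul B hdet]
    · simp
  have hBs_inv_y : B *ᵥ s ⬝ᵥ B⁻¹ *ᵥ y = s ⬝ᵥ y := by
    rw [dotProduct_comm, ← hB.isHermitian.dotProduct_mulVec_comm, mulVec_mulVec,
      mul_nonsing_inv B hdet, one_mulVec]
  have hVBU : V * (B⁻¹ * U) =
      !![-(s ⬝ᵥ B *ᵥ s)⁻¹ * (B *ᵥ s ⬝ᵥ s), -(s ⬝ᵥ B *ᵥ s)⁻¹ * (B *ᵥ s ⬝ᵥ B⁻¹ *ᵥ y);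
        (s ⬝ᵥ y)⁻¹ * (y ⬝ᵥ s), (s ⬝ᵥ y)⁻¹ * (y ⬝ᵥ B⁻¹ *ᵥ y)] := by
    rw [hBU]
    ext k l
    fin_cases k <;> fin_cases l <;>
      simp [V, mul_apply, dotProduct, Finset.mul_sum, mul_assoc]
  rw [hUV, det_add_mul U V hdet, Matrix.mul_assoc, hVBU, det_fin_two]
  congr 1
  simp [hBs_inv_y, dotProduct_comm y s, dotProduct_comm (B *ᵥ s) s, hσ.ne', hsy.ne',
    div_eq_inv_mul]

variable [DecidableEq n]

noncomputable def bfgsPotential (B : Matrix n n ℝ) : ℝ :=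
  B.trace - Real.log B.det

theorem bfgsPotential_smul_one (δ : ℝ) :
    bfgsPotential (δ • (1 : Matrix n n ℝ)) = Fintype.card n * (δ - Real.log δ) := by
  simp [bfgsPotential, Real.log_pow]
  ring

theorem PosDef.bfgsPotential_bfgsUpdate_le {B : Matrix n n ℝ} (hB : B.PosDef) {s y : n → ℝ}
    (hsy : 0 < s ⬝ᵥ y) :
    bfgsPotential (B.bfgsUpdate s y) ≤
      bfgsPotential B + (y ⬝ᵥ y) / (s ⬝ᵥ y) - Real.log ((s ⬝ᵥ y) / (s ⬝ᵥ s)) - 1 := by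
  have hs : s ≠ 0 := by rintro rfl; simp at hsy
  have hss : 0 < s ⬝ᵥ s := by simpa using dotProduct_star_self_pos_iff.mpr hs
  set σ := s ⬝ᵥ B *ᵥ s
  have hσ : 0 < σ := by simpa using hB.dotProduct_mulVec_pos hs
  have hσ_le : σ / (s ⬝ᵥ s) ≤ (B *ᵥ s ⬝ᵥ B *ᵥ s) / σ := by
    rw [div_le_div_iff₀ hss hσ, ← sq, mul_comm]
    exact dotProduct_sq_le_dotProduct_self_mul s (B *ᵥ s)
  have hlog : Real.log (σ / (s ⬝ᵥ s)) ≤ σ / (s ⬝ᵥ s) - 1 :=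
    Real.log_le_sub_one_of_pos (div_pos hσ hss)
  have hlog_split : Real.log ((s ⬝ᵥ y) / σ) =
      Real.log ((s ⬝ᵥ y) / (s ⬝ᵥ s)) - Real.log (σ / (s ⬝ᵥ s)) := by
    rw [← Real.log_div (div_pos hsy hss).ne' (div_pos hσ hss).ne',
      div_div_div_cancel_right₀ hss.ne']
  rw [bfgsPotential, bfgsPotential, trace_bfgsUpdate, hB.det_bfgsUpdate hsy,
    Real.log_mul hB.det_pos.ne' (div_pos hsy hσ).ne', hlog_split]
  linarith

theorem PosDef.bfgsPotential_bfgsUpdate_le_add {B : Matrix n n ℝ} (hB : B.PosDef)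
    {s y : n → ℝ} {m M : ℝ} (hm : 0 < m) (hsy : 0 < s ⬝ᵥ y)
    (hlow : m ≤ (s ⬝ᵥ y) / (s ⬝ᵥ s)) (hup : (y ⬝ᵥ y) / (s ⬝ᵥ y) ≤ M) :
    bfgsPotential (B.bfgsUpdate s y) ≤ bfgsPotential B + (M - Real.log m) := by
  have := hB.bfgsPotential_bfgsUpdate_le hsy
  have := Real.log_le_log hm hlow
  linarith

theorem PosDef.bfgsPotential_eq_sum {A : Matrix n n ℝ} (hA : A.PosDef) :
    bfgsPotential A = ∑ i, (hA.isHermitian.eigenvalues i - Real.log (hA.isHermitian.eigenvalues i)) := by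
  rw [bfgsPotential, hA.1.trace_eq_sum_eigenvalues, hA.1.det_eq_prod_eigenvalues,
    Finset.sum_sub_distrib]
  simp only [RCLike.ofReal_real_eq_id, id]
  rw [Real.log_prod fun i _ => (hA.eigenvalues_pos i).ne']

theorem PosDef.iSup_eigenvalues_div_iInf_le_exp_bfgsPotential [Nonempty n]
    {A : Matrix n n ℝ} (hA : A.PosDef) :
    (⨆ j, hA.isHermitian.eigenvalues j) / (⨅ j, hA.isHermitian.eigenvalues j) ≤ Real.exp (bfgsPotential A) := by
  have hpos := hA.eigenvalues_pos
  obtain ⟨i, hi⟩ := Finite.exists_max hA.isHermitian.eigenvalues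
  obtain ⟨j, hj⟩ := Finite.exists_min hA.isHermitian.eigenvalues
  have hsup : ⨆ k, hA.isHermitian.eigenvalues k = hA.isHermitian.eigenvalues i :=
    le_antisymm (ciSup_le hi) (le_ciSup (Finite.bddAbove_range _) i)
  have hinf : ⨅ k, hA.isHermitian.eigenvalues k = hA.isHermitian.eigenvalues j :=
    le_antisymm (ciInf_le (Finite.bddBelow_range _) j) (le_ciInf hj)
  rw [hsup, hinf, ← Real.exp_log (div_pos (hpos i) (hpos j)), Real.exp_le_exp,
    Real.log_div (hpos i).ne' (hpos j).ne', hA.bfgsPotential_eq_sum]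
  exact Real.log_sub_log_le_sum_sub_log hpos i j

end Matrix

open Matrix

theorem lbfgs_condition_number_bound_general
    {d : ℕ} (hd : 0 < d) (t : ℕ)
    (mhat Mhat δ : ℝ) (hm : 0 < mhat)
    (hδl : mhat ≤ δ) (hδu : δ ≤ Mhat)
    (B : ℕ → Matrix (Fin d) (Fin d) ℝ)
    (hB0 : B 0 = δ • (1 : Matrix (Fin d) (Fin d) ℝ))
    (s y : ℕ → Fin d → ℝ)
    (hsy : ∀ i < t, 0 < s i ⬝ᵥ y i)
    (hlow : ∀ i < t, s i ⬝ᵥ y i / (s i ⬝ᵥ s i) ≥ mhat)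
    (hup : ∀ i < t, y i ⬝ᵥ y i / (s i ⬝ᵥ y i) ≤ Mhat)
    (hupd : ∀ i < t, B (i + 1) =
      B i - (s i ⬝ᵥ (B i).mulVec (s i))⁻¹ •
          vecMulVec ((B i).mulVec (s i)) ((B i).mulVec (s i)) +
        (s i ⬝ᵥ y i)⁻¹ • vecMulVec (y i) (y i)) :
    (∀ i ≤ t, (B i).PosDef) ∧
      ∀ h : (B t).IsHermitian,
        (⨆ j, h.eigenvalues j) / (⨅ j, h.eigenvalues j) ≤
          Real.exp (((d : ℝ) + t) * (Mhat - Real.log mhat)) := by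
  have hδ : 0 < δ := hm.trans_le hδl
  have key : ∀ i ≤ t, (B i).PosDef ∧
      bfgsPotential (B i) ≤ ((d : ℝ) + i) * (Mhat - Real.log mhat) := by
    intro i hi
    induction i with
    | zero =>
      refine ⟨hB0 ▸ PosDef.one.smul hδ, ?_⟩
      rw [hB0, bfgsPotential_smul_one, Fintype.card_fin, Nat.cast_zero, add_zero]
      have hlog : Real.log mhat ≤ Real.log δ := Real.log_le_log hm hδl
      gcongr
    | succ i ih =>
      have hit : i < t := hi
      obtain ⟨hpd, hψ⟩ := ih hit.le
      have hstep : B (i + 1) = (B i).bfgsUpdate (s i) (y i) := hupd i hit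
      refine ⟨hstep ▸ hpd.bfgsUpdate (hsy i hit), ?_⟩
      calc bfgsPotential (B (i + 1))
          ≤ bfgsPotential (B i) + (Mhat - Real.log mhat) := hstep ▸
            hpd.bfgsPotential_bfgsUpdate_le_add hm (hsy i hit) (hlow i hit) (hup i hit)
        _ ≤ ((d : ℝ) + (i + 1 : ℕ)) * (Mhat - Real.log mhat) := by push_cast; linarith
  have : Nonempty (Fin d) := Fin.pos_iff_nonempty.mp hd
  obtain ⟨hpd, hψ⟩ := key t le_rfl
  exact ⟨fun i hi => (key i hi).1, fun _ =>
    hpd.iSup_eigenvalues_div_iInf_le_exp_bfgsPotential.trans (Real.exp_le_exp.mpr hψ)⟩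

/-- Condition number bound on the L-BFGS matrix `B_t` built from the scaled identity
`B₀ = δ I` by `t` BFGS updates whose curvature pairs satisfy the bounds `m̂`, `M̂`
(key estimate in the L-BFGS case of Lemma 3.2). -/
theorem lbfgs_condition_number_bound
    {d : ℕ} (hd : 0 < d) (t : ℕ)
    (mhat Mhat δ : ℝ) (hm : 0 < mhat) (hmM : mhat ≤ Mhat)
    (hδl : mhat ≤ δ) (hδu : δ ≤ Mhat)
    (B : ℕ → Matrix (Fin d) (Fin d) ℝ)
    (hB0 : B 0 = δ • (1 : Matrix (Fin d) (Fin d) ℝ))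
    (s y : ℕ → Fin d → ℝ)
    (hs : ∀ i < t, s i ≠ 0)
    (hsy : ∀ i < t, 0 < s i ⬝ᵥ y i)
    (hlow : ∀ i < t, s i ⬝ᵥ y i / (s i ⬝ᵥ s i) ≥ mhat)
    (hup : ∀ i < t, y i ⬝ᵥ y i / (s i ⬝ᵥ y i) ≤ Mhat)
    (hupd : ∀ i < t, B (i + 1) =
      B i - (s i ⬝ᵥ (B i).mulVec (s i))⁻¹ •
          vecMulVec ((B i).mulVec (s i)) ((B i).mulVec (s i)) +
        (s i ⬝ᵥ y i)⁻¹ • vecMulVec (y i) (y i)) :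
    (∀ i ≤ t, (B i).PosDef) ∧
      ∀ h : (B t).IsHermitian,
        (⨆ j, h.eigenvalues j) / (⨅ j, h.eigenvalues j) ≤
          Real.exp (((d : ℝ) + t) * (Mhat - Real.log mhat)) :=
  lbfgs_condition_number_bound_general hd t mhat Mhat δ hm hδl hδu B hB0 s y hsy hlow hup hupd
end
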